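/- arXiv:2005.10633 — 16 statements merged into one kernel-verified Lean document; each statement's English description precedes it below -/
import Mathlib

section
/- Let D be an integral domain, D' an overring of D, and a, b ∈ D with a ≠ 0 and aD' ∩ D = aD. If b divides a in D, then bD' ∩ D = bD. -/
section Contraction

variable {R S : Type*} [CommRing R] [CommRing S] [Algebra R S] {T : Set S}

/-- Multiplying `d = b v` by `c` gives `d c = a v`, so `b c ∣ d c`, and `c` cancels. -/
theorem dvd_of_exists_mem_eq_mul [IsDomain R] {a b c d : R} (hc : c ≠ 0) (habc : a = b * c)
    (hA : ∀ d : R, (∃ v ∈ T, algebraMap R S d = algebraMap R S a * v) → a ∣ d)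
    (hd : ∃ v ∈ T, algebraMap R S d = algebraMap R S b * v) : b ∣ d := by
  obtain ⟨v, hv, hdv⟩ := hd
  have hdc : algebraMap R S (d * c) = algebraMap R S a * v := by
    rw [map_mul, hdv, habc, map_mul]
    ring
  rw [← mul_dvd_mul_iff_right hc, ← habc]
  exact hA _ ⟨v, hv, hdc⟩

theorem exists_mem_eq_mul_of_dvd (hT : Set.range (algebraMap R S) ⊆ T) {b d : R} (h : b ∣ d) :
    ∃ v ∈ T, algebraMap R S d = algebraMap R S b * v := by
  obtain ⟨e, rfl⟩ := h
  exact ⟨algebraMap R S e, hT ⟨e, rfl⟩, map_mul _ _ _⟩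

end Contraction

theorem stmt1 (D : Type*) [CommRing D] [IsDomain D]
    (D' : Subring (FractionRing D))
    (hD' : Set.range (algebraMap D (FractionRing D)) ⊆ D')
    (a b : D) (ha : a ≠ 0)
    (hA : ∀ d : D, (∃ v ∈ D', algebraMap D (FractionRing D) d
        = algebraMap D (FractionRing D) a * v) ↔ a ∣ d)
    (hba : b ∣ a) :
    ∀ d : D, (∃ v ∈ D', algebraMap D (FractionRing D) d
        = algebraMap D (FractionRing D) b * v) ↔ b ∣ d := by
  obtain ⟨c, habc⟩ := hba
  have hc : c ≠ 0 := right_ne_zero_of_mul (habc ▸ ha)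
  exact fun d => ⟨dvd_of_exists_mem_eq_mul hc habc (fun d => (hA d).mp),
    exists_mem_eq_mul_of_dvd hD'⟩
end

section
/- Let D be an integral domain, D' an overring of D, and a, b ∈ D with a ≠ 0, aD' ∩ D = aD, and √(aD) ⊆ √(bD). Then bD' ∩ D = bD. -/
/-!
Since `a ∈ √(aD) ⊆ √(bD)`, some power `a ^ n = b * c` lies in `bD`. Cancelling one factor `a`
at a time shows that `a ^ n D' ∩ D = a ^ n D` follows from `aD' ∩ D = aD`. Now if `d = b v` with
`v ∈ D'`, then `c d = a ^ n v`, so `a ^ n = b c` divides `c d`, and cancelling `c ≠ 0` gives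
`b ∣ d`.
-/

section

variable {R S : Type*} [CommRing R] [CommRing S] [Algebra R S]

/-- `aT ∩ R ⊆ aR`, i.e. the principal ideal `aR` is contracted from the overring `T`
(the reverse inclusion holds as soon as `T` contains the image of `R`). -/
def IsContractedPrincipal (T : Subring S) (a : R) : Prop :=
  ∀ d : R, (∃ v ∈ T, algebraMap R S d = algebraMap R S a * v) → a ∣ d

namespace IsContractedPrincipal

variable {T : Subring S} {a : R}

theorem pow (hT : Set.range (algebraMap R S) ⊆ T) (ha : IsLeftRegular (algebraMap R S a))
    (h : IsContractedPrincipal T a) (n : ℕ) : IsContractedPrincipal T (a ^ n) := by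
  induction n with
  | zero => exact fun d _ => pow_zero a ▸ one_dvd d
  | succ n ih =>
    rintro d ⟨v, hv, hd⟩
    have hd' : algebraMap R S d = algebraMap R S a * (algebraMap R S (a ^ n) * v) := by
      rw [hd, pow_succ', map_mul, mul_assoc]
    obtain ⟨d₁, rfl⟩ := h d ⟨_, mul_mem (hT ⟨a ^ n, rfl⟩) hv, hd'⟩
    have hd₁ : algebraMap R S d₁ = algebraMap R S (a ^ n) * v :=
      ha (by simp only [← map_mul, ← hd'])
    rw [pow_succ']
    exact mul_dvd_mul_left a (ih d₁ ⟨v, hv, hd₁⟩)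

theorem of_eq_mul [IsDomain R] {b c : R} (h : IsContractedPrincipal T a) (ha : a ≠ 0)
    (habc : a = b * c) : IsContractedPrincipal T b := by
  rintro d ⟨v, hv, hd⟩
  have hc : c ≠ 0 := right_ne_zero_of_mul (habc ▸ ha)
  have hcd : algebraMap R S (c * d) = algebraMap R S a * v := by
    rw [map_mul, hd, habc, map_mul]
    ring
  have hdvd : b * c ∣ d * c := by
    rw [← habc, mul_comm d]
    exact h _ ⟨v, hv, hcd⟩
  exact (mul_dvd_mul_iff_right hc).mp hdvd

end IsContractedPrincipal

theorem exists_mem_algebraMap_eq_mul_of_dvd {T : Subring S}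
    (hT : Set.range (algebraMap R S) ⊆ T) {b d : R} (hbd : b ∣ d) :
    ∃ v ∈ T, algebraMap R S d = algebraMap R S b * v := by
  obtain ⟨e, rfl⟩ := hbd
  exact ⟨algebraMap R S e, hT ⟨e, rfl⟩, map_mul _ _ _⟩

end

theorem stmt2 (D : Type*) [CommRing D] [IsDomain D]
    (D' : Subring (FractionRing D))
    (hD' : Set.range (algebraMap D (FractionRing D)) ⊆ D')
    (a b : D) (ha : a ≠ 0)
    (hA : ∀ d : D, (∃ v ∈ D', algebraMap D (FractionRing D) d
        = algebraMap D (FractionRing D) a * v) ↔ a ∣ d)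
    (hrad : (Ideal.span {a} : Ideal D).radical ≤ (Ideal.span {b}).radical) :
    ∀ d : D, (∃ v ∈ D', algebraMap D (FractionRing D) d
        = algebraMap D (FractionRing D) b * v) ↔ b ∣ d := by
  obtain ⟨n, hn⟩ := hrad (Ideal.le_radical (Ideal.mem_span_singleton_self a))
  obtain ⟨c, hc⟩ := Ideal.mem_span_singleton'.mp hn
  have haK : IsLeftRegular (algebraMap D (FractionRing D) a) :=
    (IsRegular.of_ne_zero (IsFractionRing.to_map_ne_zero_of_mem_nonZeroDivisors
      (mem_nonZeroDivisors_of_ne_zero ha))).left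
  have hb : IsContractedPrincipal D' b :=
    ((IsContractedPrincipal.pow hD' haK (fun d => (hA d).mp) n).of_eq_mul
      (pow_ne_zero n ha) (by rw [← hc, mul_comm]))
  exact fun d => ⟨hb d, exists_mem_algebraMap_eq_mul_of_dvd hD'⟩
end

section
/- Let D be an integral domain and let a ∈ D be a valuation element. If b ∈ D satisfies √(aD) ⊆ √(bD), then the ideals aD and bD are comparable under inclusion. -/
/-!
Since `V` is a valuation ring, `a ∣ b` or `b ∣ a` in `V`. In the first case `b ∈ aV ∩ D = aD`.
In the second case write `a = b w` with `w ∈ V`; then `b ∣ a²y` in `D` forces `b ∣ ay`, because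
`a²y = bd` gives `d = a (w y) ∈ aV ∩ D = aD`. Descending from `b ∣ aⁿ`, which the radical
hypothesis provides, yields `b ∣ a`.
-/

/-- `a` is a valuation element of the domain `D`: `a` is a nonzero nonunit and there is a
valuation overring `V` of `D` (inside the fraction field) with `aV ∩ D = aD`. -/
def IsValuationElement (D : Type*) [CommRing D] [IsDomain D] (a : D) : Prop :=
  a ≠ 0 ∧ ¬ IsUnit a ∧
  ∃ V : Subring (FractionRing D),
    Set.range (algebraMap D (FractionRing D)) ⊆ V ∧
    ValuationRing V ∧
    ∀ d : D, (∃ v ∈ V, algebraMap D (FractionRing D) d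
        = algebraMap D (FractionRing D) a * v) ↔ a ∣ d

section

variable {D K : Type*} [CommRing D] [IsDomain D] [CommRing K] [IsDomain K] [Algebra D K]
  [FaithfulSMul D K] {a b : D} {V : Subring K}

theorem dvd_mul_of_dvd_sq_mul (ha : a ≠ 0) (hb : b ≠ 0)
    (hDV : Set.range (algebraMap D K) ⊆ V)
    (hV : ∀ d : D, (∃ v ∈ V, algebraMap D K d = algebraMap D K a * v) → a ∣ d)
    {w : K} (hw : w ∈ V) (haw : algebraMap D K a = algebraMap D K b * w)
    {y : D} (h : b ∣ a ^ 2 * y) : b ∣ a * y := by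
  obtain ⟨d, hd⟩ := h
  have hd_mem : algebraMap D K d = algebraMap D K a * (w * algebraMap D K y) := by
    have hb' : algebraMap D K b ≠ 0 :=
      (map_ne_zero_iff _ (FaithfulSMul.algebraMap_injective D K)).mpr hb
    refine mul_left_cancel₀ hb' ?_
    rw [← map_mul, ← hd, map_mul, map_pow]
    linear_combination algebraMap D K a * algebraMap D K y * haw
  obtain ⟨e, rfl⟩ := hV d ⟨_, V.mul_mem hw (hDV ⟨y, rfl⟩), hd_mem⟩
  exact ⟨e, mul_left_cancel₀ ha (by linear_combination hd)⟩

theorem dvd_of_dvd_pow (ha : a ≠ 0) (hb : b ≠ 0)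
    (hDV : Set.range (algebraMap D K) ⊆ V)
    (hV : ∀ d : D, (∃ v ∈ V, algebraMap D K d = algebraMap D K a * v) → a ∣ d)
    {w : K} (hw : w ∈ V) (haw : algebraMap D K a = algebraMap D K b * w) :
    ∀ n : ℕ, b ∣ a ^ n → b ∣ a
  | 0, h => (isUnit_of_dvd_one (by simpa using h)).dvd
  | 1, h => by simpa using h
  | n + 2, h => dvd_of_dvd_pow ha hb hDV hV hw haw (n + 1) <| by
      simpa [pow_succ'] using
        dvd_mul_of_dvd_sq_mul ha hb hDV hV hw haw (y := a ^ n) (by rwa [← pow_add, add_comm])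

end

theorem stmt3 (D : Type*) [CommRing D] [IsDomain D] (a b : D)
    (ha : IsValuationElement D a)
    (hrad : (Ideal.span {a} : Ideal D).radical ≤ (Ideal.span {b}).radical) :
    (Ideal.span {a} : Ideal D) ≤ Ideal.span {b} ∨ (Ideal.span {b} : Ideal D) ≤ Ideal.span {a} := by
  obtain ⟨ha0, -, V, hDV, hVR, hV⟩ := ha
  simp only [Ideal.span_singleton_le_span_singleton]
  obtain ⟨n, hn⟩ : ∃ n, b ∣ a ^ n := by
    simpa only [Ideal.mem_radical_iff, Ideal.mem_span_singleton] using
      hrad (Ideal.le_radical (Ideal.mem_span_singleton_self a))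
  have hb0 : b ≠ 0 := by
    rintro rfl
    exact ha0 (pow_eq_zero_iff'.mp (zero_dvd_iff.mp hn)).1
  obtain ⟨c, hc | hc⟩ := ValuationRing.cond (⟨_, hDV ⟨a, rfl⟩⟩ : V) ⟨_, hDV ⟨b, rfl⟩⟩
  · exact .inr <| (hV b).1 ⟨c, c.2, congrArg Subtype.val hc.symm⟩
  · exact .inl <| dvd_of_dvd_pow ha0 hb0 hDV (fun d => (hV d).1) c.2
      (congrArg Subtype.val hc.symm) n hn
end

section
/- Let D be an integral domain and a ∈ D a valuation element. Then any two principal ideals of D that contain a are comparable under inclusion. -/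
section

variable {D : Type*} [CommRing D] [IsDomain D] {a b c : D}

local notation "φ" => algebraMap D (FractionRing D)

theorem dvd_of_algebraMap_mul_eq {V : Subring (FractionRing D)}
    (hV : ∀ d : D, (∃ v ∈ V, φ d = φ a * v) ↔ a ∣ d) (ha : a ≠ 0) (hba : b ∣ a)
    {z : FractionRing D} (hz : z ∈ V) (hbc : φ b * z = φ c) : b ∣ c := by
  obtain ⟨b', rfl⟩ := hba
  have hb' : b' ≠ 0 := right_ne_zero_of_mul ha
  have hdvd : b * b' ∣ c * b' := (hV _).1 ⟨z, hz, by rw [map_mul, map_mul, ← hbc]; ring⟩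
  exact (mul_dvd_mul_iff_right hb').1 hdvd

theorem IsValuationElement.dvd_total_of_dvd (ha : IsValuationElement D a) (hb : b ∣ a)
    (hc : c ∣ a) : b ∣ c ∨ c ∣ b := by
  obtain ⟨ha0, -, V, hDV, hVR, hV⟩ := ha
  rcases ValuationRing.dvd_total (⟨φ b, hDV ⟨b, rfl⟩⟩ : V) ⟨φ c, hDV ⟨c, rfl⟩⟩ with
    ⟨z, hz⟩ | ⟨z, hz⟩
  · exact .inl (dvd_of_algebraMap_mul_eq hV ha0 hb z.2 (congrArg Subtype.val hz).symm)
  · exact .inr (dvd_of_algebraMap_mul_eq hV ha0 hc z.2 (congrArg Subtype.val hz).symm)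

end

theorem stmt4 (D : Type*) [CommRing D] [IsDomain D] (a b c : D)
    (ha : IsValuationElement D a)
    (hb : a ∈ (Ideal.span {b} : Ideal D)) (hc : a ∈ (Ideal.span {c} : Ideal D)) :
    (Ideal.span {b} : Ideal D) ≤ Ideal.span {c} ∨ (Ideal.span {c} : Ideal D) ≤ Ideal.span {b} := by
  rw [Ideal.mem_span_singleton] at hb hc
  simp only [Ideal.span_singleton_le_span_singleton]
  exact (ha.dvd_total_of_dvd hb hc).symm
end

section
/- Let D be an integral domain and a ∈ D a valuation element. Then the intersection ⋂_{n∈ℕ} aⁿD is a prime ideal of D. -/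
theorem pow_dvd_of_map_pow_dvd_map {D V F : Type*} [CommMonoid D] [CommMonoidWithZero V]
    [IsCancelMulZero V] [FunLike F D V] [MonoidHomClass F D V] (f : F) {a : D} (ha : f a ≠ 0)
    (hdvd : ∀ d, f a ∣ f d → a ∣ d) (n : ℕ) (d : D) (h : f a ^ n ∣ f d) : a ^ n ∣ d := by
  induction n generalizing d with
  | zero => simp
  | succ n ih =>
    obtain ⟨d', rfl⟩ := hdvd d ((dvd_pow_self _ n.succ_ne_zero).trans h)
    rw [map_mul, pow_succ', mul_dvd_mul_iff_left ha] at h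
    rw [pow_succ']
    exact mul_dvd_mul_left a (ih d' h)

theorem Ideal.comap_span_singleton_map_pow {D V : Type*} [CommRing D] [CommRing V]
    [IsCancelMulZero V] (f : D →+* V) {a : D} (ha : f a ≠ 0) (hdvd : ∀ d, f a ∣ f d → a ∣ d)
    (n : ℕ) :    (Ideal.span {f a ^ n}).comap f = Ideal.span {a ^ n} := by
  ext d
  simp only [Ideal.mem_comap, Ideal.mem_span_singleton]
  exact ⟨pow_dvd_of_map_pow_dvd_map f ha hdvd n d, fun h => map_pow f a n ▸ map_dvd f h⟩

theorem ValuationRing.isPrime_iInf_span_pow {V : Type*} [CommRing V] [IsDomain V]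
    [ValuationRing V] {a : V} (ha : ¬IsUnit a) :
    (⨅ n : ℕ, Ideal.span {a ^ (n + 1)}).IsPrime := by
  have mem : ∀ x, x ∈ ⨅ n : ℕ, Ideal.span {a ^ (n + 1)} ↔ ∀ n : ℕ, a ^ (n + 1) ∣ x := by
    simp [Ideal.mem_span_singleton]
  refine ⟨fun htop => ha ?_, fun {x y} hxy => or_iff_not_imp_left.2 fun hx => ?_⟩
  · exact isUnit_of_dvd_one (by simpa using (mem 1).1 (htop ▸ Submodule.mem_top) 0)
  rw [mem] at hx hxy ⊢
  push Not at hx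
  obtain ⟨m, hm⟩ := hx
  have hx0 : x ≠ 0 := by rintro rfl; exact hm (dvd_zero _)
  obtain ⟨c, hc⟩ : x ∣ a ^ (m + 1) := (ValuationRing.dvd_total x _).resolve_right hm
  intro n
  have hxy' : x * (c * a ^ (n + 1)) ∣ x * y := by
    rw [← mul_assoc, ← hc, ← pow_add, add_right_comm]
    exact hxy (m + n + 1)
  exact dvd_of_mul_left_dvd ((mul_dvd_mul_iff_left hx0).1 hxy')

theorem stmt5 (D : Type*) [CommRing D] [IsDomain D] (a : D)
    (ha : IsValuationElement D a) :
    (⨅ n : ℕ, (Ideal.span {a ^ (n + 1)} : Ideal D)).IsPrime := by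
  obtain ⟨ha0, hau, V, hDV, hV, hdvdV⟩ := ha
  let ι : D →+* V := (algebraMap D (FractionRing D)).codRestrict V fun d => hDV ⟨d, rfl⟩
  have hdvd : ∀ d, ι a ∣ ι d → a ∣ d := fun d ⟨c, hc⟩ =>
    (hdvdV d).1 ⟨c, c.2, congrArg Subtype.val hc⟩
  have hιa : ι a ≠ 0 := fun h =>
    ha0 (IsFractionRing.injective D (FractionRing D) (by simpa [ι] using congrArg Subtype.val h))
  have hιau : ¬IsUnit (ι a) := fun hu => hau (isUnit_of_dvd_one (hdvd 1 (map_one ι ▸ hu.dvd)))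
  simpa only [Ideal.comap_iInf, Ideal.comap_span_singleton_map_pow ι hιa hdvd] using
    (ValuationRing.isPrime_iInf_span_pow hιau).comap ι
end

section
/- Let D be an integral domain. If every nonzero nonunit of D is a valuation element, then D is a valuation domain. -/
section

variable {D : Type*} [CommRing D] [IsDomain D]

theorem dvd_of_dvd_in_overring_of_contraction {x y : D} (hy : y ≠ 0)
    {V : Subring (FractionRing D)}
    (hV : ∀ d : D, (∃ v ∈ V, algebraMap D (FractionRing D) d
        = algebraMap D (FractionRing D) (x * y) * v) ↔ x * y ∣ d)
    {v : FractionRing D} (hv : v ∈ V)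
    (hxy : algebraMap D (FractionRing D) y = algebraMap D (FractionRing D) x * v) : x ∣ y := by
  rw [← mul_dvd_mul_iff_right hy, ← hV]
  exact ⟨v, hv, by rw [map_mul, map_mul, hxy]; ring⟩

theorem IsValuationElement.dvd_or_dvd {a b : D} (hab : IsValuationElement D (a * b)) :
    a ∣ b ∨ b ∣ a := by
  obtain ⟨hne, -, V, hDV, hVal, hV⟩ := hab
  obtain ⟨ha, hb⟩ := mul_ne_zero_iff.mp hne
  have hV' := mul_comm a b ▸ hV
  rcases ValuationRing.dvd_total (⟨_, hDV ⟨a, rfl⟩⟩ : V) ⟨_, hDV ⟨b, rfl⟩⟩ with ⟨v, hv⟩ | ⟨v, hv⟩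
  · exact .inl (dvd_of_dvd_in_overring_of_contraction hb hV v.2 (congrArg Subtype.val hv))
  · exact .inr (dvd_of_dvd_in_overring_of_contraction ha hV' v.2 (congrArg Subtype.val hv))

end

theorem stmt6 (D : Type*) [CommRing D] [IsDomain D]
    (h : ∀ a : D, a ≠ 0 → ¬ IsUnit a → IsValuationElement D a) :
    ValuationRing D := by
  refine ValuationRing.iff_dvd_total.mpr ⟨fun a b => ?_⟩
  by_cases ha : a = 0
  · exact .inr (ha ▸ dvd_zero b)
  by_cases hb : b = 0
  · exact .inl (hb ▸ dvd_zero a)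
  by_cases hu : IsUnit (a * b)
  · exact .inl (isUnit_of_mul_isUnit_left hu).dvd
  exact (h (a * b) (mul_ne_zero ha hb) hu).dvd_or_dvd
end

section
/- Every valuation factorization domain (VFD) is integrally closed. -/
/-- `D` is a valuation factorization domain: every nonzero nonunit is a finite product of
valuation elements. -/
def IsVFD (D : Type*) [CommRing D] [IsDomain D] : Prop :=
  ∀ a : D, a ≠ 0 → ¬ IsUnit a →
    ∃ l : Multiset D, (∀ x ∈ l, IsValuationElement D x) ∧ l.prod = a

/-!
A valuation overring `V` of `D` is a valuation subring of the fraction field, hence integrally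
closed, so it contains every element `y` integral over `D`. Thus if `a` is a valuation element and
`b = a y` with `y` integral, then `b ∈ aV ∩ D = aD`. Peeling off the valuation factors of `a` one
at a time (each cofactor times `y` is again integral) shows that `a ∣ b` whenever `b = a y` with
`y` integral, for every nonzero `a` of a VFD; applied to `y = b / a` this is integral closedness.
-/

namespace Subring

variable {K : Type*} [Field K]

theorem div_mem_of_dvd {V : Subring K} {u w : V} (h : u ∣ w) : (w : K) / u ∈ V := by
  obtain ⟨c, rfl⟩ := h
  by_cases hu : (u : K) = 0 <;> simp [hu]

theorem div_mem_or_div_mem {V : Subring K} [ValuationRing V] (u w : V) :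
    (w : K) / u ∈ V ∨ (u : K) / w ∈ V :=
  (ValuationRing.dvd_total u w).imp div_mem_of_dvd div_mem_of_dvd

variable {D : Type*} [CommRing D] [Algebra D K]

theorem mem_or_inv_mem_of_valuationRing [IsFractionRing D K] {V : Subring K} [ValuationRing V]
    (hD : Set.range (algebraMap D K) ⊆ V) (z : K) : z ∈ V ∨ z⁻¹ ∈ V := by
  obtain ⟨p, q, -, rfl⟩ := IsFractionRing.div_surjective (A := D) z
  rw [inv_div]
  exact div_mem_or_div_mem ⟨_, hD ⟨q, rfl⟩⟩ ⟨_, hD ⟨p, rfl⟩⟩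

theorem mem_of_isIntegral_of_valuationRing [IsFractionRing D K] {V : Subring K} [ValuationRing V]
    (hD : Set.range (algebraMap D K) ⊆ V) {y : K} (hy : IsIntegral D y) : y ∈ V := by
  let A : ValuationSubring K := ⟨V, mem_or_inv_mem_of_valuationRing hD⟩
  have : IsIntegrallyClosedIn A.toSubring K := inferInstanceAs (IsIntegrallyClosedIn A K)
  exact (integralClosure_le_iff (T := A.toSubring)).mpr (fun r => hD ⟨r, rfl⟩) hy

end Subring

def DvdIntegralMultiples (D : Type*) [CommRing D] [IsDomain D] (a : D) : Prop :=
  ∀ (b : D) (y : FractionRing D), IsIntegral D y →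
    algebraMap D (FractionRing D) b = algebraMap D (FractionRing D) a * y → a ∣ b

section

variable {D : Type*} [CommRing D] [IsDomain D]

theorem IsValuationElement.dvdIntegralMultiples {a : D} (ha : IsValuationElement D a) :
    DvdIntegralMultiples D a := by
  obtain ⟨-, -, V, hD, hV, hdvd⟩ := ha
  intro b y hy hb
  exact (hdvd b).mp ⟨y, Subring.mem_of_isIntegral_of_valuationRing hD hy, hb⟩

theorem dvdIntegralMultiples_one : DvdIntegralMultiples D 1 :=
  fun b _ _ _ => one_dvd b

theorem DvdIntegralMultiples.mul {a a' : D} (ha : DvdIntegralMultiples D a)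
    (ha' : DvdIntegralMultiples D a') : DvdIntegralMultiples D (a * a') := by
  intro b y hy hb
  set β := algebraMap D (FractionRing D)
  have hb' : β b = β a * (β a' * y) := by rw [hb, map_mul, mul_assoc]
  obtain ⟨c, rfl⟩ := ha b _ (isIntegral_algebraMap.mul hy) hb'
  rcases eq_or_ne a 0 with rfl | ha0
  · simp
  have hc : β c = β a' * y := mul_left_cancel₀
    ((map_ne_zero_iff β (IsFractionRing.injective D _)).mpr ha0) (by rw [← map_mul, hb'])
  exact mul_dvd_mul_left a (ha' c y hy hc)

theorem IsVFD.dvdIntegralMultiples (h : IsVFD D) {a : D} (ha : a ≠ 0) :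
    DvdIntegralMultiples D a := by
  by_cases hu : IsUnit a
  · exact fun b _ _ _ => hu.dvd
  obtain ⟨l, hl, rfl⟩ := h a ha hu
  exact Multiset.prod_induction _ l (fun _ _ => DvdIntegralMultiples.mul) dvdIntegralMultiples_one
    fun q hq => (hl q hq).dvdIntegralMultiples

end

theorem stmt7 (D : Type*) [CommRing D] [IsDomain D] (h : IsVFD D) :
    IsIntegrallyClosed D := by
  rw [isIntegrallyClosed_iff (FractionRing D)]
  intro x hx
  obtain ⟨⟨b, a⟩, hba⟩ := IsLocalization.surj (nonZeroDivisors D) x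
  have hb : algebraMap D _ b = algebraMap D _ a * x := by rw [← hba, mul_comm]
  obtain ⟨c, rfl⟩ := h.dvdIntegralMultiples (nonZeroDivisors.coe_ne_zero a) b x hx hb
  refine ⟨c, mul_left_cancel₀ (IsFractionRing.to_map_ne_zero_of_mem_nonZeroDivisors a.2) ?_⟩
  rw [← map_mul, hb]
end

section
/- Let D be a quasi-local (local) integral domain of Krull dimension one. If D has at least one valuation element, then D is a valuation domain. -/
/-- `aV ∩ D ⊆ aD`. -/
def DescendsDvd {D K : Type*} [CommRing D] [CommRing K] [Algebra D K] (V : Subring K) (a : D) :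
    Prop :=
  ∀ d : D, (∃ v ∈ V, algebraMap D K d = algebraMap D K a * v) → a ∣ d

section DescendsDvd

variable {D K : Type*} [CommRing D] [CommRing K] [Algebra D K] [FaithfulSMul D K]
  {V : Subring K}

theorem DescendsDvd.mul [IsDomain K] {a b : D} (ha : DescendsDvd V a) (hb : DescendsDvd V b)
    (ha0 : a ≠ 0) (hbV : algebraMap D K b ∈ V) : DescendsDvd V (a * b) := by
  rintro d ⟨v, hv, hd⟩
  obtain ⟨d', rfl⟩ :=
    ha d ⟨algebraMap D K b * v, mul_mem hbV hv, by rw [hd, map_mul, mul_assoc]⟩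
  have hιa : algebraMap D K a ≠ 0 :=
    (map_ne_zero_iff _ (FaithfulSMul.algebraMap_injective D K)).mpr ha0
  have hd' : algebraMap D K d' = algebraMap D K b * v := by
    refine mul_left_cancel₀ hιa ?_
    rw [← map_mul, hd, map_mul, mul_assoc]
  exact mul_dvd_mul_left a (hb d' ⟨v, hv, hd'⟩)

theorem DescendsDvd.pow [IsDomain D] [IsDomain K] {a : D} (ha : DescendsDvd V a) (ha0 : a ≠ 0)
    (haV : algebraMap D K a ∈ V) (n : ℕ) : DescendsDvd V (a ^ n) := by
  induction n with
  | zero => exact fun d _ => by simp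
  | succ n ih => exact pow_succ a n ▸ ih.mul ha (pow_ne_zero n ha0) haV

theorem descendsDvd_zero : DescendsDvd V (0 : D) := by
  rintro d ⟨v, -, hd⟩
  rw [map_zero, zero_mul, map_eq_zero_iff _ (FaithfulSMul.algebraMap_injective D K)] at hd
  exact hd ▸ dvd_rfl

theorem descendsDvd_of_ringKrullDim_eq_one [IsDomain D] [IsLocalRing D] [IsDomain K]
    (hdim : ringKrullDim D = 1) {a : D} (ha : DescendsDvd V a) (ha0 : a ≠ 0) (hau : ¬IsUnit a)
    (haV : algebraMap D K a ∈ V) (x : D) : DescendsDvd V x := by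
  rcases eq_or_ne x 0 with rfl | hx0
  · exact descendsDvd_zero
  have hrad : a ∈ (Ideal.span {x}).radical :=
    (ringKrullDim_eq_one_iff_of_isLocalRing_isDomain.mp hdim).2 x hx0
      ((IsLocalRing.mem_maximalIdeal a).mpr hau)
  obtain ⟨n, hn⟩ := Ideal.mem_radical_iff.mp hrad
  obtain ⟨z, hz⟩ := Ideal.mem_span_singleton.mp hn
  have hz0 : z ≠ 0 := by
    rintro rfl
    exact pow_ne_zero n ha0 (by simpa using hz)
  rintro y ⟨v, hv, hy⟩
  have hyz : x * z ∣ y * z := hz ▸ ha.pow ha0 haV n (y * z) ⟨v, hv, by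
    rw [hz, map_mul, map_mul, hy]
    ring⟩
  rw [mul_comm x, mul_comm y] at hyz
  exact (mul_dvd_mul_iff_left hz0).mp hyz

end DescendsDvd

theorem ValuationRing.of_forall_descendsDvd {D K : Type*} [CommRing D] [IsDomain D] [Field K]
    [Algebra D K] {V : Subring K} [ValuationRing V]
    (hDV : Set.range (algebraMap D K) ⊆ V) (hV : ∀ x : D, DescendsDvd V x) :
    ValuationRing D := by
  refine ValuationRing.iff_dvd_total.mpr ⟨fun x y => ?_⟩
  rcases ValuationRing.dvd_total (⟨_, hDV ⟨x, rfl⟩⟩ : V) ⟨_, hDV ⟨y, rfl⟩⟩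
    with ⟨c, hc⟩ | ⟨c, hc⟩
  · exact Or.inl (hV x y ⟨c, c.2, congrArg Subtype.val hc⟩)
  · exact Or.inr (hV y x ⟨c, c.2, congrArg Subtype.val hc⟩)

theorem stmt8 (D : Type*) [CommRing D] [IsDomain D] [IsLocalRing D]
    (hdim : ringKrullDim D = 1)
    (h : ∃ a : D, IsValuationElement D a) :
    ValuationRing D := by
  obtain ⟨a, ha0, hau, V, hDV, hVval, hV⟩ := h
  have ha : DescendsDvd V a := fun d => (hV d).mp
  exact ValuationRing.of_forall_descendsDvd hDV
    (descendsDvd_of_ringKrullDim_eq_one hdim ha ha0 hau (hDV ⟨a, rfl⟩))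
end

section
/- Let D be an integral domain and a ∈ D a valuation element. Then √(aD) is a prime ideal of D. -/
namespace Ideal

variable {R S : Type*} [CommRing R] [CommRing S] [PreValuationRing S]

theorem isPrime_radical_of_ne_top {I : Ideal S} (hI : I ≠ ⊤) : I.radical.IsPrime := by
  obtain ⟨M, hM, hIM⟩ := I.exists_le_maximal hI
  rw [radical_eq_sInf]
  exact sInf_isPrime_of_isChain ⟨M, hIM, hM.isPrime⟩ (fun P _ Q _ _ => Std.Total.total P Q)
    fun _ hP => hP.2

theorem isPrime_radical_comap (f : R →+* S) {J : Ideal S} (hJ : J.comap f ≠ ⊤) :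
    (J.comap f).radical.IsPrime := by
  have hJ' : J ≠ ⊤ := fun h => hJ (by rw [h, comap_top])
  rw [← comap_radical]
  exact (isPrime_radical_of_ne_top hJ').comap f

end Ideal

theorem IsValuationElement.exists_comap_span_eq {D : Type*} [CommRing D] [IsDomain D] {a : D}
    (ha : IsValuationElement D a) :
    ∃ (V : Subring (FractionRing D)) (_ : ValuationRing V) (f : D →+* V),
      (Ideal.span {f a}).comap f = Ideal.span {a} := by
  obtain ⟨-, -, V, hDV, hV, hdvd⟩ := ha
  refine ⟨V, hV, (algebraMap D _).codRestrict V fun d => hDV ⟨d, rfl⟩, ?_⟩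
  ext d
  rw [Ideal.mem_comap, Ideal.mem_span_singleton, Ideal.mem_span_singleton, ← hdvd]
  exact ⟨fun ⟨c, hc⟩ => ⟨c, c.2, congrArg Subtype.val hc⟩,
    fun ⟨v, hv, h⟩ => ⟨⟨v, hv⟩, Subtype.ext h⟩⟩

theorem stmt9 (D : Type*) [CommRing D] [IsDomain D] (a : D)
    (ha : IsValuationElement D a) :
    (Ideal.span {a} : Ideal D).radical.IsPrime := by
  obtain ⟨V, _, f, hf⟩ := ha.exists_comap_span_eq
  rw [← hf]
  refine Ideal.isPrime_radical_comap f ?_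
  rw [hf, Ne, Ideal.span_singleton_eq_top]
  exact ha.2.1
end

section
/- Let D be an integral domain, a ∈ D a valuation element, and S a multiplicatively closed subset of D such that a is a nonunit of the localization S⁻¹D. Then a is a valuation element of S⁻¹D. -/
open scoped nonZeroDivisors

theorem IsFractionRing.of_isLocalization {R : Type*} [CommRing R] {M : Submonoid R}
    (hM : M ≤ R⁰) (S T : Type*) [CommRing S] [CommRing T] [Algebra R S] [Algebra R T]
    [Algebra S T] [IsScalarTower R S T] [IsLocalization M S] [IsFractionRing S T] :
    IsFractionRing R T := by
  have hT := IsLocalization.localization_localization_isLocalization_of_has_all_units M S⁰ T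
    fun _ hx ↦ hx.mem_nonZeroDivisors
  rwa [le_antisymm (comap_nonZeroDivisors_le_of_injective (IsLocalization.injective S hM))
    (IsLocalization.nonZeroDivisors_le_comap M S)] at hT

namespace Subring

variable {K : Type*} [CommRing K]

def localization (A : Subring K) (S : Submonoid K) (hS : S ≤ A.toSubmonoid) : Subring K where
  carrier := {x | ∃ s ∈ S, s * x ∈ A}
  one_mem' := ⟨1, S.one_mem, by simp⟩
  zero_mem' := ⟨1, S.one_mem, by simp⟩
  mul_mem' := by
    rintro x y ⟨s, hs, hsx⟩ ⟨t, ht, hty⟩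
    exact ⟨s * t, S.mul_mem hs ht, by simpa only [mul_mul_mul_comm] using A.mul_mem hsx hty⟩
  add_mem' := by
    rintro x y ⟨s, hs, hsx⟩ ⟨t, ht, hty⟩
    refine ⟨s * t, S.mul_mem hs ht, ?_⟩
    convert A.add_mem (A.mul_mem (hS ht) hsx) (A.mul_mem (hS hs) hty) using 1
    ring
  neg_mem' := by
    rintro x ⟨s, hs, hsx⟩
    exact ⟨s, hs, by simpa only [mul_neg] using A.neg_mem hsx⟩

theorem le_localization {A : Subring K} {S : Submonoid K} {hS : S ≤ A.toSubmonoid} :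
    A ≤ A.localization S hS :=
  fun x hx ↦ ⟨1, S.one_mem, by simpa using hx⟩

theorem mem_or_inv_mem_of_valuationRing_s10 {D K : Type*} [CommRing D] [Field K] [Algebra D K]
    [IsFractionRing D K] (V : Subring K) [ValuationRing V] (hV : ∀ d, algebraMap D K d ∈ V)
    (x : K) : x ∈ V ∨ x⁻¹ ∈ V := by
  have : IsFractionRing V K := IsFractionRing.of_field V K fun z ↦ by
    obtain ⟨x, y, -, rfl⟩ := IsFractionRing.div_surjective D z
    exact ⟨⟨_, hV x⟩, ⟨_, hV y⟩, rfl⟩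
  rcases ValuationRing.isInteger_or_isInteger V x with ⟨y, hy⟩ | ⟨y, hy⟩
  · exact .inl (hy ▸ y.2)
  · exact .inr (hy ▸ y.2)

end Subring

namespace ValuationSubring

variable {K : Type*} [Field K]

def localization (V : ValuationSubring K) (S : Submonoid K) (hS : S ≤ V.toSubring.toSubmonoid) :
    ValuationSubring K :=
  V.ofLE (V.toSubring.localization S hS) Subring.le_localization

variable {D : Type*} [CommRing D] [Algebra D K]

/-- The paper's condition on a valuation overring `V` of `D` inside `K`: `aV ∩ D = aD`. -/
def WitnessesValuationElement (V : ValuationSubring K) (a : D) : Prop :=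
  (∀ d : D, algebraMap D K d ∈ V) ∧
    ∀ d : D, (∃ v ∈ V, algebraMap D K d = algebraMap D K a * v) ↔ a ∣ d

theorem WitnessesValuationElement.comap {K' : Type*} [Field K'] [Algebra D K']
    {V : ValuationSubring K'} {a : D} (hV : V.WitnessesValuationElement a) (e : K ≃ₐ[D] K') :
    (V.comap (e : K →+* K')).WitnessesValuationElement a := by
  refine ⟨fun d ↦ by simpa using hV.1 d, fun d ↦ ?_⟩
  rw [← hV.2 d]
  constructor
  · rintro ⟨v, hv, h⟩
    exact ⟨e v, hv, by simpa using congrArg e h⟩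
  · rintro ⟨v, hv, h⟩
    exact ⟨e.symm v, by simpa using hv, e.injective (by simpa using h)⟩

theorem WitnessesValuationElement.exists_localization {L : Type*} [CommRing L] [Algebra D L]
    [Algebra L K] [IsScalarTower D L K] (S : Submonoid D) [IsLocalization S L]
    {V : ValuationSubring K} {a : D} (hV : V.WitnessesValuationElement a) :
    ∃ W : ValuationSubring K, W.WitnessesValuationElement (algebraMap D L a) := by
  have hSV : S.map (algebraMap D K) ≤ V.toSubring.toSubmonoid := by
    rintro _ ⟨s, -, rfl⟩
    exact hV.1 s
  have hfrac (l : L) {d : D} {t : S} (hl : l * algebraMap D L t = algebraMap D L d) :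
      algebraMap D K d = algebraMap L K l * algebraMap D K t := by
    simp only [IsScalarTower.algebraMap_apply D L K, ← hl, map_mul]
  have hL (l : L) : algebraMap L K l ∈ V.localization _ hSV := by
    obtain ⟨⟨d, t⟩, hl⟩ := IsLocalization.surj S l
    refine ⟨algebraMap D K t, ⟨t, t.2, rfl⟩, ?_⟩
    rw [mul_comm, ← hfrac l hl]
    exact hV.1 d
  refine ⟨V.localization _ hSV, hL, fun l ↦ ⟨?_, ?_⟩⟩
  · rintro ⟨w, ⟨_, ⟨s, hs, rfl⟩, hsw⟩, hlw⟩
    obtain ⟨⟨d, t⟩, hl⟩ := IsLocalization.surj S l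
    obtain ⟨c, hc⟩ : a ∣ d * s := by
      refine (hV.2 _).mp ⟨algebraMap D K t * (algebraMap D K s * w), V.mul_mem _ _ (hV.1 t) hsw, ?_⟩
      rw [map_mul, hfrac l hl, hlw, ← IsScalarTower.algebraMap_apply]
      ring
    refine (IsLocalization.map_units L (⟨t * s, S.mul_mem t.2 hs⟩ : S)).dvd_mul_right.mp
      ⟨algebraMap D L c, ?_⟩
    change l * algebraMap D L (t * s) = _
    rw [map_mul, ← mul_assoc, hl, ← map_mul, hc, map_mul]
  · rintro ⟨m, rfl⟩
    exact ⟨_, hL m, by rw [map_mul, ← IsScalarTower.algebraMap_apply]⟩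

end ValuationSubring

theorem isValuationElement_iff (D : Type*) [CommRing D] [IsDomain D] (K : Type*) [Field K]
    [Algebra D K] [IsFractionRing D K] (a : D) :
    IsValuationElement D a ↔
      a ≠ 0 ∧ ¬ IsUnit a ∧ ∃ V : ValuationSubring K, V.WitnessesValuationElement a := by
  let e : FractionRing D ≃ₐ[D] K := FractionRing.algEquiv D K
  refine and_congr_right' (and_congr_right' ?_)
  trans ∃ V : ValuationSubring (FractionRing D), V.WitnessesValuationElement a
  · constructor
    · rintro ⟨V, hDV, _, hV⟩
      have hDV' (d : D) := hDV ⟨d, rfl⟩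
      exact ⟨.ofSubring V (V.mem_or_inv_mem_of_valuationRing_s10 hDV'), hDV', hV⟩
    · rintro ⟨V, hDV, hV⟩
      exact ⟨V.toSubring, Set.range_subset_iff.mpr hDV, inferInstanceAs (ValuationRing V), hV⟩
  · exact ⟨fun ⟨V, hV⟩ ↦ ⟨_, hV.comap e.symm⟩, fun ⟨V, hV⟩ ↦ ⟨_, hV.comap e⟩⟩

theorem stmt10 (D : Type*) [CommRing D] [IsDomain D] (a : D)
    (ha : IsValuationElement D a) (S : Submonoid D) (hS : S ≤ nonZeroDivisors D)
    (hau : ¬ IsUnit (algebraMap D (Localization S) a)) :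
    @IsValuationElement (Localization S) _ (IsLocalization.isDomain_localization hS)
      (algebraMap D (Localization S) a) := by
  have := IsLocalization.isDomain_localization (M := S) hS
  have : IsFractionRing D (FractionRing (Localization S)) :=
    .of_isLocalization hS (Localization S) _
  obtain ⟨ha0, -, V, hV⟩ := (isValuationElement_iff D (FractionRing (Localization S)) a).mp ha
  exact (isValuationElement_iff (Localization S) (FractionRing (Localization S)) _).mpr
    ⟨(map_ne_zero_iff _ (IsLocalization.injective _ hS)).mpr ha0, hau, hV.exists_localization S⟩
end

section
/- Let D be a VFD and S a multiplicatively closed subset of D with 0 ∉ S. Then the localization S⁻¹D is a VFD. -/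
/-!
Write `a = d / s` with `d = p₁ ⋯ pₙ` a product of valuation elements of `D`, `pᵢ` witnessed by the
valuation overring `Vᵢ`. In `S⁻¹D` the image of `pᵢ` is either a unit or again a valuation
element, now witnessed by `S⁻¹Vᵢ`, a valuation ring because it contains `Vᵢ`: if `q = pᵢ w` with
`w ∈ S⁻¹Vᵢ`, clearing denominators puts a multiple `d t` (`t ∈ S`) of `q` into `pᵢVᵢ ∩ D = pᵢD`.
Since `a` is not a unit, some factor is not, and it absorbs the remaining units and `1 / s`.
-/

open nonZeroDivisors

section Monoid

variable {M : Type*} [CommMonoid M]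

theorem exists_multiset_prod_eq_of_associated {P : M → Prop}
    (hP : ∀ u x, IsUnit u → P x → P (u * x)) (l : Multiset M)
    (hl : ∀ x ∈ l, IsUnit x ∨ P x) {a : M} (ha : ¬IsUnit a) (hla : Associated l.prod a) :
    ∃ l' : Multiset M, (∀ x ∈ l', P x) ∧ l'.prod = a := by
  induction l using Multiset.induction_on generalizing a with
  | empty => exact absurd (hla.isUnit isUnit_one) ha
  | cons x t ih =>
    rw [Multiset.forall_mem_cons] at hl
    rw [Multiset.prod_cons] at hla
    rcases hl.1 with hx | hx
    · exact ih hl.2 ha ((associated_unit_mul_left t.prod x hx).symm.trans hla)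
    obtain ⟨u, rfl⟩ := hla
    by_cases ht : IsUnit t.prod
    · exact ⟨{t.prod * u * x}, by simpa using hP _ _ (ht.mul u.isUnit) hx,
        by rw [Multiset.prod_singleton]; ac_rfl⟩
    · obtain ⟨l', hl', hprod⟩ := ih hl.2 ht (Associated.refl _)
      exact ⟨(u * x) ::ₘ l', Multiset.forall_mem_cons.2 ⟨hP _ _ u.isUnit hx, hl'⟩,
        by rw [Multiset.prod_cons, hprod]; ac_rfl⟩

end Monoid

section ValuationElement

variable {R : Type*} [CommRing R]

/-- `IsValuationElement` relative to any field `K` over `R`, stated with a `ValuationSubring`;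
only `aV ∩ R ⊆ aR` is recorded, the reverse inclusion being automatic. -/
def IsValuationElementIn (K : Type*) [Field K] [Algebra R K] (a : R) : Prop :=
  a ≠ 0 ∧ ¬IsUnit a ∧ ∃ V : ValuationSubring K, Set.range (algebraMap R K) ⊆ V ∧
    ∀ d : R, ∀ v ∈ V, algebraMap R K d = algebraMap R K a * v → a ∣ d

theorem IsValuationElementIn.of_algEquiv {K₁ K₂ : Type*} [Field K₁] [Field K₂] [Algebra R K₁]
    [Algebra R K₂] (e : K₁ ≃ₐ[R] K₂) {a : R} (h : IsValuationElementIn K₁ a) :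
    IsValuationElementIn K₂ a := by
  obtain ⟨ha0, hau, V, hRV, hV⟩ := h
  refine ⟨ha0, hau, V.comap (e.symm : K₂ →+* K₁), ?_, fun d v hv hdv => hV d _ hv ?_⟩
  · rintro _ ⟨r, rfl⟩
    simpa using hRV ⟨r, rfl⟩
  · simpa using congrArg e.symm hdv

theorem IsValuationElementIn.unit_mul {K : Type*} [Field K] [Algebra R K] {u a : R}
    (hu : IsUnit u) (ha : IsValuationElementIn K a) : IsValuationElementIn K (u * a) := by
  obtain ⟨ha0, hau, V, hRV, hV⟩ := ha
  refine ⟨fun h => ha0 ((hu.mul_right_eq_zero).mp h),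
    fun h => hau (isUnit_of_mul_isUnit_right h), V, hRV, fun d v hv hdv => ?_⟩
  refine hu.mul_left_dvd.mpr (hV d (algebraMap R K u * v) (mul_mem (hRV ⟨u, rfl⟩) hv) ?_)
  rw [hdv, map_mul]
  ring

end ValuationElement

section FractionField

variable {D K : Type*} [CommRing D] [IsDomain D] [Field K] [Algebra D K] [IsFractionRing D K]

theorem mem_or_inv_mem_of_valuationRing {V : Subring K} [ValuationRing V]
    (hDV : Set.range (algebraMap D K) ⊆ V) (x : K) : x ∈ V ∨ x⁻¹ ∈ V := by
  obtain ⟨d, e, he, rfl⟩ := IsFractionRing.div_surjective (A := D) x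
  have he0 : algebraMap D K e ≠ 0 := IsFractionRing.to_map_ne_zero_of_mem_nonZeroDivisors he
  by_cases hd0 : algebraMap D K d = 0
  · simp [hd0]
  rcases ValuationRing.dvd_total (⟨_, hDV ⟨d, rfl⟩⟩ : V) ⟨_, hDV ⟨e, rfl⟩⟩ with
    ⟨c, hc⟩ | ⟨c, hc⟩
  · right
    have hc' : algebraMap D K e = algebraMap D K d * c := congrArg Subtype.val hc
    rw [inv_div, hc', mul_div_cancel_left₀ _ hd0]
    exact c.2
  · left
    have hc' : algebraMap D K d = algebraMap D K e * c := congrArg Subtype.val hc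
    rw [hc', mul_div_cancel_left₀ _ he0]
    exact c.2

variable (D) in
theorem isValuationElement_iff_isValuationElementIn_fractionRing {a : D} :
    IsValuationElement D a ↔ IsValuationElementIn (FractionRing D) a := by
  constructor
  · rintro ⟨ha0, hau, V, hDV, hV, hcond⟩
    exact ⟨ha0, hau, .ofSubring V (mem_or_inv_mem_of_valuationRing hDV), hDV,
      fun d v hv hdv => (hcond d).1 ⟨v, hv, hdv⟩⟩
  · rintro ⟨ha0, hau, V, hDV, hcond⟩
    refine ⟨ha0, hau, V.toSubring, hDV, inferInstanceAs (ValuationRing V), fun d =>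
      ⟨fun ⟨v, hv, hdv⟩ => hcond d v hv hdv, ?_⟩⟩
    rintro ⟨c, rfl⟩
    exact ⟨_, hDV ⟨c, rfl⟩, map_mul _ _ _⟩

theorem IsValuationElement.unit_mul {u a : D} (hu : IsUnit u) (ha : IsValuationElement D a) :
    IsValuationElement D (u * a) :=
  (isValuationElement_iff_isValuationElementIn_fractionRing D).2
    (((isValuationElement_iff_isValuationElementIn_fractionRing D).1 ha).unit_mul hu)

variable (K) in
theorem isValuationElement_iff_isValuationElementIn {a : D} :
    IsValuationElement D a ↔ IsValuationElementIn K a :=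
  (isValuationElement_iff_isValuationElementIn_fractionRing D).trans
    ⟨.of_algEquiv (FractionRing.algEquiv D K), .of_algEquiv (FractionRing.algEquiv D K).symm⟩

end FractionField

section Localization

variable {D K : Type*} [CommRing D] [Field K] [Algebra D K]

def Subring.localization_s11 (A : Subring K) (S : Submonoid D)
    (hDA : Set.range (algebraMap D K) ⊆ A) : Subring K where
  carrier := {x | ∃ s ∈ S, algebraMap D K s * x ∈ A}
  one_mem' := ⟨1, S.one_mem, by simp⟩
  mul_mem' := by
    rintro x y ⟨s, hs, hsx⟩ ⟨t, ht, hty⟩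
    refine ⟨s * t, S.mul_mem hs ht, ?_⟩
    convert A.mul_mem hsx hty using 1
    rw [map_mul]; ring
  zero_mem' := ⟨1, S.one_mem, by simp⟩
  add_mem' := by
    rintro x y ⟨s, hs, hsx⟩ ⟨t, ht, hty⟩
    refine ⟨s * t, S.mul_mem hs ht, ?_⟩
    convert A.add_mem (A.mul_mem (hDA ⟨t, rfl⟩) hsx) (A.mul_mem (hDA ⟨s, rfl⟩) hty) using 1
    rw [map_mul]; ring
  neg_mem' := by
    rintro x ⟨s, hs, hsx⟩
    exact ⟨s, hs, by simpa using A.neg_mem hsx⟩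

theorem Subring.le_localization_s11 (A : Subring K) (S : Submonoid D)
    (hDA : Set.range (algebraMap D K) ⊆ A) : A ≤ A.localization_s11 S hDA :=
  fun x hx => ⟨1, S.one_mem, by simpa using hx⟩

variable {L : Type*} [CommRing L] [Algebra D L] [Algebra L K] [IsScalarTower D L K]

theorem Subring.range_algebraMap_subset_localization (S : Submonoid D) [IsLocalization S L]
    (A : Subring K) (hDA : Set.range (algebraMap D K) ⊆ A) :
    Set.range (algebraMap L K) ⊆ A.localization_s11 S hDA := by
  rintro _ ⟨q, rfl⟩
  obtain ⟨⟨x, s⟩, hq⟩ := IsLocalization.surj S q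
  refine ⟨s, s.2, ?_⟩
  rw [IsScalarTower.algebraMap_apply D L K, ← map_mul, mul_comm, hq,
    ← IsScalarTower.algebraMap_apply]
  exact hDA ⟨x, rfl⟩

theorem IsValuationElementIn.algebraMap_of_not_isUnit [FaithfulSMul D K] (S : Submonoid D)
    [IsLocalization S L] {a : D}
    (ha : IsValuationElementIn K a) (hna : ¬IsUnit (algebraMap D L a)) :
    IsValuationElementIn K (algebraMap D L a) := by
  obtain ⟨ha0, -, V, hDV, hV⟩ := ha
  have hLK : ∀ x : D, algebraMap L K (algebraMap D L x) = algebraMap D K x := fun x =>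
    (IsScalarTower.algebraMap_apply D L K x).symm
  refine ⟨fun h => ha0 (FaithfulSMul.algebraMap_injective D K (by rw [← hLK, h, map_zero,
    map_zero])), hna, .ofLE V _ (V.toSubring.le_localization_s11 S hDV),
    V.toSubring.range_algebraMap_subset_localization S hDV, fun q w hw hqw => ?_⟩
  obtain ⟨⟨d, s⟩, hq⟩ := IsLocalization.surj S q
  obtain ⟨t, ht, htw⟩ := hw
  have hdt : algebraMap D K (d * t) =
      algebraMap D K a * (algebraMap D K s * (algebraMap D K t * w)) := by
    rw [map_mul, ← hLK d, ← hq, map_mul, hqw, hLK, hLK]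
    ring
  obtain ⟨m, hm⟩ := hV _ _ (mul_mem (hDV ⟨s, rfl⟩) htw) hdt
  have hunit := IsLocalization.map_units L (⟨s * t, S.mul_mem s.2 ht⟩ : S)
  refine hunit.dvd_mul_right.mp ⟨algebraMap D L m, ?_⟩
  rw [← map_mul, ← hm, map_mul, map_mul, ← mul_assoc, hq]

end Localization

theorem IsVFD.of_isLocalization {D L : Type*} [CommRing D] [IsDomain D] [CommRing L] [IsDomain L]
    [Algebra D L] (S : Submonoid D) [IsLocalization S L] (hS : S ≤ D⁰) (h : IsVFD D) :
    IsVFD L := by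
  let : Algebra L (FractionRing D) :=
    IsLocalization.localizationAlgebraOfSubmonoidLe L (FractionRing D) S D⁰ hS
  have : IsScalarTower D L (FractionRing D) :=
    IsLocalization.localization_isScalarTower_of_submonoid_le L (FractionRing D) S D⁰ hS
  have : IsFractionRing L (FractionRing D) :=
    IsFractionRing.isFractionRing_of_isLocalization S L (FractionRing D) hS
  have himage (p : D) (hp : IsValuationElement D p) :
      IsUnit (algebraMap D L p) ∨ IsValuationElement L (algebraMap D L p) :=
    or_iff_not_imp_left.2 fun hpu =>
      (isValuationElement_iff_isValuationElementIn (FractionRing D)).2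
        (((isValuationElement_iff_isValuationElementIn _).1 hp).algebraMap_of_not_isUnit S hpu)
  intro a ha0 hau
  obtain ⟨⟨d, s⟩, hds⟩ := IsLocalization.surj S a
  have hsu := IsLocalization.map_units L s
  have hd0 : d ≠ 0 := by
    rintro rfl
    exact ha0 (hsu.mul_left_eq_zero.mp (by simpa using hds))
  have hdu : ¬IsUnit d := fun hd =>
    hau (isUnit_of_mul_isUnit_left (hds ▸ hd.map (algebraMap D L)))
  obtain ⟨l, hl, rfl⟩ := h d hd0 hdu
  refine exists_multiset_prod_eq_of_associated (fun _ _ => IsValuationElement.unit_mul)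
    (l.map (algebraMap D L)) ?_ hau ?_
  · simpa using fun p hp => himage p (hl p hp)
  · rw [← map_multiset_prod, ← hds]
    exact associated_mul_unit_left a _ hsu

theorem stmt11 (D : Type*) [CommRing D] [IsDomain D] (h : IsVFD D)
    (S : Submonoid D) (hS : S ≤ nonZeroDivisors D) :
    @IsVFD (Localization S) _ (IsLocalization.isDomain_localization hS) := by
  have := IsLocalization.isDomain_localization hS
  exact IsVFD.of_isLocalization S hS h
end

section
/- Let D be a VFD and P a height-one prime ideal of D. Then the localization D_P is a valuation domain. -/
theorem IsVFD.exists_isValuationElement_mem {D : Type*} [CommRing D] [IsDomain D] (hD : IsVFD D)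
    {P : Ideal D} [hP : P.IsPrime] (hP0 : P ≠ ⊥) : ∃ a ∈ P, IsValuationElement D a := by
  obtain ⟨t, htP, ht0⟩ := Submodule.exists_mem_ne_zero_of_ne_bot hP0
  obtain ⟨l, hl, rfl⟩ := hD t ht0 fun ht => hP.ne_top (P.eq_top_of_isUnit_mem htP ht)
  obtain ⟨a, hal, haP⟩ := hP.multiset_prod_mem_iff_exists_mem l |>.mp htP
  exact ⟨a, haP, hl a hal⟩

theorem IsLocalization.valuationRing_of_dvd_total {D S : Type*} [CommRing D] [CommRing S]
    [IsDomain S] [Algebra D S] (M : Submonoid D) [IsLocalization M S]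
    (h : ∀ x y : D, algebraMap D S x ∣ algebraMap D S y ∨ algebraMap D S y ∣ algebraMap D S x) :
    ValuationRing S := by
  have hassoc (r : S) : ∃ x : D, Associated r (algebraMap D S x) := by
    obtain ⟨⟨x, s⟩, hrs⟩ := IsLocalization.surj M r
    exact ⟨x, IsLocalization.map_units S s |>.unit, hrs⟩
  refine ValuationRing.iff_dvd_total.mpr ⟨fun r₁ r₂ => ?_⟩
  obtain ⟨x, hx⟩ := hassoc r₁
  obtain ⟨y, hy⟩ := hassoc r₂
  simpa only [hx.dvd_iff_dvd_left, hx.dvd_iff_dvd_right, hy.dvd_iff_dvd_left,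
    hy.dvd_iff_dvd_right] using h x y

theorem Localization.AtPrime.exists_dvd_pow_of_forall_lt_eq_bot {D : Type*} [CommRing D]
    {P : Ideal D} [P.IsPrime] (hht : ∀ Q : Ideal D, Q.IsPrime → Q < P → Q = ⊥)
    {x a : D} (hx : x ≠ 0) (ha : a ∈ P) :
    ∃ k : ℕ,
      algebraMap D (Localization.AtPrime P) x ∣ algebraMap D (Localization.AtPrime P) a ^ k := by
  set ψ := algebraMap D (Localization.AtPrime P)
  suffices ψ a ∈ (Ideal.span {ψ x}).radical by
    simpa only [Ideal.mem_span_singleton] using Ideal.mem_radical_iff.mp this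
  rw [Ideal.radical_eq_sInf, Submodule.mem_sInf]
  -- a prime of `D_P` containing `x` contracts to a nonzero prime inside `P`, hence to `P`
  rintro q ⟨hxq, hq⟩
  have hqP : Ideal.comap ψ q ≤ P :=
    (Ideal.comap_mono (IsLocalRing.le_maximalIdeal hq.ne_top)).trans
      Localization.AtPrime.under_maximalIdeal.le
  have hxQ : x ∈ Ideal.comap ψ q := hxq (Ideal.mem_span_singleton_self _)
  obtain hlt | heq := hqP.lt_or_eq
  · exact absurd (by simpa [hht _ (Ideal.IsPrime.comap ψ) hlt] using hxQ) hx
  · exact heq.ge ha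

section Contraction

variable {D K : Type*} [CommRing D] [IsDomain D] [Field K] [Algebra D K] [IsFractionRing D K]
  {V : Subring K} {a : D}

theorem pow_dvd_of_eq_pow_mul (ha : a ≠ 0) (haV : algebraMap D K a ∈ V)
    (hdvd : ∀ d : D, (∃ v ∈ V, algebraMap D K d = algebraMap D K a * v) → a ∣ d) :
    ∀ (k : ℕ) {d : D}, (∃ v ∈ V, algebraMap D K d = algebraMap D K a ^ k * v) → a ^ k ∣ d
  | 0, _, _ => by simp
  | k + 1, d, ⟨v, hv, hdv⟩ => by
    obtain ⟨e, rfl⟩ := hdvd d ⟨_, V.mul_mem (V.pow_mem haV k) hv, by rw [hdv]; ring⟩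
    have hev : algebraMap D K e = algebraMap D K a ^ k * v := by
      refine mul_left_cancel₀ (IsFractionRing.to_map_ne_zero_of_mem_nonZeroDivisors
        (mem_nonZeroDivisors_of_ne_zero ha)) ?_
      rw [← map_mul, hdv]; ring
    rw [pow_succ']
    exact mul_dvd_mul_left a (pow_dvd_of_eq_pow_mul ha haV hdvd k ⟨v, hv, hev⟩)

theorem IsLocalization.algebraMap_dvd_of_eq_mul {S : Type*} [CommRing S] [Algebra D S]
    (M : Submonoid D) (hM : M ≤ nonZeroDivisors D) [IsLocalization M S]
    (hDV : Set.range (algebraMap D K) ⊆ V) (ha : a ≠ 0)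
    (hdvd : ∀ d : D, (∃ v ∈ V, algebraMap D K d = algebraMap D K a * v) → a ∣ d)
    {x y : D} {k : ℕ} (hxa : algebraMap D S x ∣ algebraMap D S a ^ k)
    {c : K} (hc : c ∈ V) (hy : algebraMap D K y = algebraMap D K x * c) :
    algebraMap D S x ∣ algebraMap D S y := by
  obtain ⟨r, hr⟩ := hxa
  obtain ⟨⟨z, s⟩, hrs⟩ := IsLocalization.surj M r
  have hsa : (s : D) * a ^ k = x * z := IsLocalization.injective S hM <| by
    rw [map_mul, map_mul, map_pow, mul_comm, hr, mul_assoc, hrs]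
  have hz : z ≠ 0 := by
    rintro rfl
    exact mul_ne_zero (nonZeroDivisors.ne_zero (hM s.2)) (pow_ne_zero k ha) (by simpa using hsa)
  -- `yz` lies in `aᵏV ∩ D = aᵏD`
  obtain ⟨w, hw⟩ : a ^ k ∣ y * z := by
    refine pow_dvd_of_eq_pow_mul ha (hDV ⟨a, rfl⟩) hdvd k
      ⟨algebraMap D K s * c, V.mul_mem (hDV ⟨s, rfl⟩) hc, ?_⟩
    rw [map_mul, hy, mul_right_comm, ← map_mul, ← hsa, map_mul, map_pow]; ring
  have hsy : (s : D) * y = x * w := mul_left_cancel₀ hz <| by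
    linear_combination (s : D) * hw + w * hsa
  rw [← (IsLocalization.map_units S s).dvd_mul_left, ← map_mul, hsy, map_mul]
  exact dvd_mul_right _ _

end Contraction

theorem stmt12 (D : Type*) [CommRing D] [IsDomain D] (h : IsVFD D)
    (P : Ideal D) [P.IsPrime] (hP0 : P ≠ ⊥)
    (hht : ∀ Q : Ideal D, Q.IsPrime → Q < P → Q = ⊥) :
    ValuationRing (Localization.AtPrime P) := by
  obtain ⟨a, haP, ha0, -, V, hDV, hV, hdvd⟩ := h.exists_isValuationElement_mem hP0
  set φ := algebraMap D (FractionRing D)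
  have key (x y : D) (hxy : ∃ c ∈ V, φ y = φ x * c) :
      algebraMap D (Localization.AtPrime P) x ∣ algebraMap D (Localization.AtPrime P) y := by
    rcases eq_or_ne x 0 with rfl | hx0
    · obtain ⟨c, -, hc⟩ := hxy
      have hy : y = 0 := (map_eq_zero_iff φ (IsFractionRing.injective D _)).mp (by simpa using hc)
      simp [hy]
    obtain ⟨k, hk⟩ := Localization.AtPrime.exists_dvd_pow_of_forall_lt_eq_bot hht hx0 haP
    obtain ⟨c, hc, hyc⟩ := hxy
    exact IsLocalization.algebraMap_dvd_of_eq_mul P.primeCompl P.primeCompl_le_nonZeroDivisors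
      hDV ha0 (fun d => (hdvd d).mp) hk hc hyc
  refine IsLocalization.valuationRing_of_dvd_total P.primeCompl fun x y => ?_
  obtain ⟨c, hc⟩ | ⟨c, hc⟩ := ValuationRing.dvd_total (⟨φ x, hDV ⟨x, rfl⟩⟩ : V) ⟨φ y, hDV ⟨y, rfl⟩⟩
  · exact .inl (key x y ⟨c, c.2, congrArg Subtype.val hc⟩)
  · exact .inr (key y x ⟨c, c.2, congrArg Subtype.val hc⟩)
end

section
/- Let D be an integral domain and let v ∈ D be a finite product of valuation elements of D such that √(vD) is a prime ideal. Then v is a valuation element of D. -/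
section ContractsPrincipal

variable {D K : Type*} [CommRing D] [CommRing K] [Algebra D K]

/-- `xV ∩ D ⊆ xD`; the reverse inclusion is automatic once `D ⊆ V`. -/
def ContractsPrincipal (V : Subring K) (x : D) : Prop :=
  ∀ d : D, (∃ w ∈ V, algebraMap D K d = algebraMap D K x * w) → x ∣ d

namespace ContractsPrincipal

variable {V : Subring K} {x y : D}

theorem one : ContractsPrincipal V (1 : D) := fun d _ => one_dvd d

theorem mul [IsDomain K] [FaithfulSMul D K] (hV : Set.range (algebraMap D K) ⊆ V)
    (hx0 : x ≠ 0) (hx : ContractsPrincipal V x) (hy : ContractsPrincipal V y) :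
    ContractsPrincipal V (x * y) := by
  rintro d ⟨w, hwV, hw⟩
  obtain ⟨d₁, rfl⟩ := hx d
    ⟨algebraMap D K y * w, mul_mem (hV ⟨y, rfl⟩) hwV, by rw [hw, map_mul, mul_assoc]⟩
  have hd₁ : algebraMap D K d₁ = algebraMap D K y * w := by
    refine mul_left_cancel₀
      ((map_ne_zero_iff _ (FaithfulSMul.algebraMap_injective D K)).mpr hx0) ?_
    rw [← map_mul, hw, map_mul, mul_assoc]
  exact mul_dvd_mul_left x (hy d₁ ⟨w, hwV, hd₁⟩)

theorem pow [IsDomain K] [FaithfulSMul D K] (hV : Set.range (algebraMap D K) ⊆ V)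
    (hx0 : x ≠ 0) (hx : ContractsPrincipal V x) : ∀ n : ℕ, ContractsPrincipal V (x ^ n)
  | 0 => by rw [pow_zero]; exact one
  | n + 1 => by rw [pow_succ']; exact hx.mul hV hx0 (pow hV hx0 hx n)

theorem multiset_prod [IsDomain K] [FaithfulSMul D K] (hV : Set.range (algebraMap D K) ⊆ V)
    {s : Multiset D} (h0 : (0 : D) ∉ s) (hs : ∀ x ∈ s, ContractsPrincipal V x) :
    ContractsPrincipal V s.prod := by
  induction s using Multiset.induction_on with
  | empty => rw [Multiset.prod_zero]; exact one
  | cons x s ih =>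
    rw [Multiset.prod_cons]
    refine (hs x (s.mem_cons_self x)).mul hV (fun hx => h0 (hx ▸ s.mem_cons_self x)) ?_
    exact ih (fun h => h0 (Multiset.mem_cons_of_mem h)) fun y hy =>
      hs y (Multiset.mem_cons_of_mem hy)

theorem of_dvd [IsDomain D] (hy0 : y ≠ 0) (hy : ContractsPrincipal V y) (hxy : x ∣ y) :
    ContractsPrincipal V x := by
  obtain ⟨c, rfl⟩ := hxy
  rintro d ⟨w, hwV, hw⟩
  obtain ⟨e, he⟩ := hy (d * c) ⟨w, hwV, by rw [map_mul, hw, map_mul, mul_right_comm]⟩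
  refine ⟨e, mul_right_cancel₀ (right_ne_zero_of_mul hy0) ?_⟩
  rw [he, mul_right_comm]

end ContractsPrincipal

end ContractsPrincipal

theorem isValuationElement_iff_s13 {D : Type*} [CommRing D] [IsDomain D] {a : D} :
    IsValuationElement D a ↔ a ≠ 0 ∧ ¬ IsUnit a ∧ ∃ V : Subring (FractionRing D),
      Set.range (algebraMap D (FractionRing D)) ⊆ V ∧ ValuationRing V ∧
      ContractsPrincipal V a := by
  refine and_congr_right' <| and_congr_right' <| exists_congr fun V =>
    and_congr_right fun hV => and_congr_right' ⟨fun h d => (h d).mp, fun h d => ⟨h d, ?_⟩⟩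
  rintro ⟨e, rfl⟩
  exact ⟨_, hV ⟨e, rfl⟩, map_mul _ _ _⟩

theorem stmt13 (D : Type*) [CommRing D] [IsDomain D] (v : D)
    (l : Multiset D) (hl : ∀ x ∈ l, IsValuationElement D x) (hprod : l.prod = v)
    (hrad : (Ideal.span {v} : Ideal D).radical.IsPrime) :
    IsValuationElement D v := by
  have hvP : l.prod ∈ (Ideal.span {v}).radical := by
    rw [hprod]; exact Ideal.le_radical (Ideal.mem_span_singleton_self v)
  obtain ⟨a, hal, haP⟩ := (hrad.multiset_prod_mem_iff_exists_mem l).mp hvP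
  obtain ⟨ha0, hau, V, hV, hVal, ha⟩ := isValuationElement_iff_s13.mp (hl a hal)
  obtain ⟨n, hn⟩ := Ideal.mem_radical_iff.mp haP
  have h0 : (0 : D) ∉ l := fun h => (hl 0 h).1 rfl
  have hdvd : ∀ x ∈ l, x ∣ v := fun x hx => hprod ▸ Multiset.dvd_prod hx
  have hcontr : ∀ x ∈ l, ContractsPrincipal V x := fun x hx =>
    (ha.pow hV ha0 n).of_dvd (pow_ne_zero n ha0)
      ((hdvd x hx).trans (Ideal.mem_span_singleton.mp hn))
  refine isValuationElement_iff_s13.mpr ⟨hprod ▸ Multiset.prod_ne_zero h0,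
    fun hv => hau (isUnit_of_dvd_unit (hdvd a hal) hv), V, hV, hVal, ?_⟩
  exact hprod ▸ ContractsPrincipal.multiset_prod hV h0 hcontr
end

section
/- Let D be a VFD. Then the valuation elements of D are precisely the nonzero nonunits a ∈ D for which √(aD) is a prime ideal of D. -/
/-!
Write `φ : D → V` for the inclusion into a valuation overring; `aV ∩ D = aD` says that `φ`
reflects divisibility by `a`. Since divisibility in `V` is total, `a ∣ (xy)ⁿ` gives, say,
`φ a ∣ φ (xy)ⁿ ∣ φ y²ⁿ`, hence `a ∣ y²ⁿ`: so `√(aD)` is prime. Conversely, if `√(aD)` is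
prime, one of the valuation-element factors `v` of `a` lies in `√(aD)`, i.e. `a ∣ vᵐ`; and
reflecting divisibility by `v` passes to `vᵐ` (cancel one `v` at a time) and then to
every divisor of `vᵐ`, so `a` is a valuation element with the same overring.
-/

/-- The converse implication holds for every `φ`, by `map_dvd`. -/
def RingHom.ReflectsDvd {R S : Type*} [CommRing R] [CommRing S] (φ : R →+* S) (a : R) : Prop :=
  ∀ d, φ a ∣ φ d → a ∣ d

namespace RingHom.ReflectsDvd

variable {R S : Type*} [CommRing R] [CommRing S] {φ : R →+* S} {a b : R}

theorem pow [IsDomain S] (h : φ.ReflectsDvd a) (ha : φ a ≠ 0) (m : ℕ) :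
    φ.ReflectsDvd (a ^ m) := by
  induction m with
  | zero => simp [RingHom.ReflectsDvd]
  | succ m ih =>
    intro d hd
    obtain ⟨d', rfl⟩ := h d (dvd_trans (by simp [pow_succ]) hd)
    rw [map_mul, map_pow, pow_succ', mul_dvd_mul_iff_left ha, ← map_pow] at hd
    rw [pow_succ']
    exact mul_dvd_mul_left a (ih d' hd)

theorem of_dvd [IsDomain R] (h : φ.ReflectsDvd b) (hb : b ≠ 0) (hab : a ∣ b) :
    φ.ReflectsDvd a := by
  obtain ⟨s, rfl⟩ := hab
  have hs : s ≠ 0 := right_ne_zero_of_mul hb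
  intro d hd
  have : a * s ∣ d * s := h (d * s) (by simpa only [map_mul] using mul_dvd_mul_right hd (φ s))
  exact (mul_dvd_mul_iff_right hs).mp this

theorem isPrime_radical_span [PreValuationRing S] (h : φ.ReflectsDvd a) (ha : ¬IsUnit a) :
    (Ideal.span {a}).radical.IsPrime := by
  refine ⟨by rwa [Ne, Ideal.radical_eq_top, Ideal.span_singleton_eq_top], ?_⟩
  intro x y hxy
  obtain ⟨n, hn⟩ := Ideal.mem_radical_iff.mp hxy
  rw [Ideal.mem_span_singleton] at hn
  have key : ∀ x y : R, φ x ^ n ∣ φ y ^ n → a ∣ (x * y) ^ n →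
      y ∈ (Ideal.span {a}).radical := by
    intro x y hxy hn
    refine Ideal.mem_radical_iff.mpr ⟨n + n, Ideal.mem_span_singleton.mpr (h _ ?_)⟩
    calc φ a ∣ φ x ^ n * φ y ^ n := by simpa only [map_pow, map_mul, mul_pow] using map_dvd φ hn
      _ ∣ φ y ^ n * φ y ^ n := mul_dvd_mul_right hxy _
      _ = φ (y ^ (n + n)) := by rw [map_pow, pow_add]
  rcases ValuationRing.dvd_total (φ x ^ n) (φ y ^ n) with hxy | hyx
  · exact Or.inr (key x y hxy hn)
  · exact Or.inl (key y x hyx (by rwa [mul_comm]))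

end RingHom.ReflectsDvd

theorem isValuationElement_iff_reflectsDvd {D : Type*} [CommRing D] [IsDomain D] (a : D) :
    IsValuationElement D a ↔ a ≠ 0 ∧ ¬IsUnit a ∧ ∃ (V : Subring (FractionRing D))
      (hDV : ∀ x, algebraMap D (FractionRing D) x ∈ V), ValuationRing V ∧
        ((algebraMap D (FractionRing D)).codRestrict V hDV).ReflectsDvd a := by
  have dvd_iff (V : Subring (FractionRing D)) (hDV : ∀ x, algebraMap D (FractionRing D) x ∈ V)
      (d : D) : (∃ v ∈ V, algebraMap D (FractionRing D) d = algebraMap D (FractionRing D) a * v)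
        ↔ (algebraMap D (FractionRing D)).codRestrict V hDV a ∣
          (algebraMap D (FractionRing D)).codRestrict V hDV d :=
    ⟨fun ⟨v, hv, hd⟩ => ⟨⟨v, hv⟩, Subtype.ext hd⟩, fun ⟨v, hd⟩ => ⟨v, v.2, congrArg Subtype.val hd⟩⟩
  refine and_congr_right fun _ => and_congr_right fun _ => ?_
  simp only [Set.range_subset_iff, SetLike.mem_coe, RingHom.ReflectsDvd]
  refine exists_congr fun V => ⟨fun ⟨hDV, hV, hdvd⟩ => ⟨hDV, hV, fun d hd => ?_⟩,
    fun ⟨hDV, hV, hdvd⟩ => ⟨hDV, hV, fun d => ⟨fun hd => ?_, fun hd => ?_⟩⟩⟩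
  · exact (hdvd d).mp ((dvd_iff V hDV d).mpr hd)
  · exact hdvd d ((dvd_iff V hDV d).mp hd)
  · exact (dvd_iff V hDV d).mpr (map_dvd _ hd)

theorem stmt14 (D : Type*) [CommRing D] [IsDomain D] (h : IsVFD D) (a : D) :
    IsValuationElement D a ↔
      a ≠ 0 ∧ ¬ IsUnit a ∧ (Ideal.span {a} : Ideal D).radical.IsPrime := by
  rw [isValuationElement_iff_reflectsDvd]
  constructor
  · rintro ⟨ha0, hau, V, hDV, hV, hrefl⟩
    exact ⟨ha0, hau, hrefl.isPrime_radical_span hau⟩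
  · rintro ⟨ha0, hau, hprime⟩
    obtain ⟨l, hl, hla⟩ := h a ha0 hau
    have : l.prod ∈ (Ideal.span {a}).radical := by
      rw [hla]; exact Ideal.le_radical (Ideal.mem_span_singleton_self a)
    obtain ⟨v, hvl, hv⟩ := (hprime.multiset_prod_mem_iff_exists_mem l).mp this
    obtain ⟨m, hm⟩ := Ideal.mem_radical_iff.mp hv
    obtain ⟨hv0, -, V, hDV, hV, hrefl⟩ := (isValuationElement_iff_reflectsDvd v).mp (hl v hvl)
    have hφv : (algebraMap D (FractionRing D)).codRestrict V hDV v ≠ 0 := fun h0 =>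
      hv0 (IsFractionRing.injective D (FractionRing D) (by simpa using congrArg Subtype.val h0))
    exact ⟨ha0, hau, V, hDV, hV,
      (hrefl.pow hφv m).of_dvd (pow_ne_zero m hv0) (Ideal.mem_span_singleton.mp hm)⟩
end

section
/- Let D be a VFD, and let a = a₁⋯aₙ be a product of valuation elements such that aᵢD and aⱼD are incomparable for all i ≠ j. Then the map i ↦ √(aᵢD) is a well-defined bijection from {1,…,n} onto the set of minimal primes of aD. -/
universe u

namespace Ideal

variable {R : Type*} [CommRing R] {ι : Type*} [Fintype ι]

theorem exists_radical_span_singleton_le_of_prod_mem {Q : Ideal R} [hQ : Q.IsPrime]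
    {a : ι → R} (h : ∏ i, a i ∈ Q) : ∃ i, (span {a i}).radical ≤ Q := by
  obtain ⟨i, -, hi⟩ := hQ.prod_mem_iff.mp h
  exact ⟨i, hQ.radical_le_iff.mpr ((span_singleton_le_iff_mem Q).mpr hi)⟩

theorem bijOn_radical_span_singleton_minimalPrimes (a : ι → R)
    (hprime : ∀ i, (span {a i}).radical.IsPrime)
    (hinc : Pairwise fun i j => ¬ (span {a i}).radical ≤ (span {a j}).radical) :
    Set.BijOn (fun i => (span {a i}).radical) Set.univ (span {∏ i, a i}).minimalPrimes := by
  have hle : ∀ i, span {∏ i, a i} ≤ (span {a i}).radical := fun i =>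
    (span_singleton_le_span_singleton.mpr (Finset.dvd_prod_of_mem a (Finset.mem_univ i))).trans
      le_radical
  have hcover : ∀ Q : Ideal R, Q.IsPrime → span {∏ i, a i} ≤ Q →
      ∃ i, (span {a i}).radical ≤ Q := fun Q _ hQ =>
    exists_radical_span_singleton_le_of_prod_mem (hQ (mem_span_singleton_self _))
  refine ⟨fun i _ => ⟨⟨hprime i, hle i⟩, ?_⟩, fun i _ j _ hij => ?_, fun Q hQ => ?_⟩
  · rintro Q ⟨hQ, hQle⟩ hQi
    obtain ⟨j, hj⟩ := hcover Q hQ hQle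
    obtain rfl | hji := eq_or_ne j i
    · exact hj
    · exact absurd (hj.trans hQi) (hinc hji)
  · by_contra hne
    exact hinc hne hij.le
  · obtain ⟨i, hi⟩ := hcover Q hQ.1.1 hQ.1.2
    exact ⟨i, Set.mem_univ i, le_antisymm hi (hQ.2 ⟨hprime i, hle i⟩ hi)⟩

end Ideal

namespace IsValuationElement

variable {D : Type u} [CommRing D] [IsDomain D] {a : D}

theorem exists_ringHom_dvd_iff (ha : IsValuationElement D a) :
    ∃ (V : Type u) (_ : CommRing V) (_ : IsDomain V) (_ : ValuationRing V) (φ : D →+* V),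
      ∀ d, φ a ∣ φ d ↔ a ∣ d := by
  obtain ⟨-, -, V, hDV, hV, hdvd⟩ := ha
  refine ⟨V, inferInstance, inferInstance, hV,
    (algebraMap D _).codRestrict V fun d => hDV ⟨d, rfl⟩, fun d => ?_⟩
  rw [← hdvd d]
  constructor
  · rintro ⟨v, hv⟩
    exact ⟨v, v.2, congrArg Subtype.val hv⟩
  · rintro ⟨v, hv, h⟩
    exact ⟨⟨v, hv⟩, Subtype.ext h⟩

theorem dvd_sq_or_dvd_sq_of_dvd_mul (ha : IsValuationElement D a) {x y : D}
    (h : a ∣ x * y) : a ∣ x ^ 2 ∨ a ∣ y ^ 2 := by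
  obtain ⟨V, _, _, _, φ, hφ⟩ := ha.exists_ringHom_dvd_iff
  have hxy : φ a ∣ φ x * φ y := map_mul φ x y ▸ map_dvd φ h
  simp only [← hφ, sq, map_mul]
  rcases ValuationRing.dvd_total (φ x) (φ y) with hd | hd
  · exact Or.inr (hxy.trans (mul_dvd_mul_right hd _))
  · exact Or.inl (hxy.trans (mul_dvd_mul_left _ hd))

theorem isPrime_radical_span_singleton (ha : IsValuationElement D a) :
    (Ideal.span {a}).radical.IsPrime := by
  refine ⟨?_, fun {x y} hxy => ?_⟩
  · rw [Ne, Ideal.radical_eq_top, Ideal.span_singleton_eq_top]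
    exact ha.2.1
  · obtain ⟨n, hn⟩ := hxy
    rw [mul_pow, Ideal.mem_span_singleton] at hn
    refine (ha.dvd_sq_or_dvd_sq_of_dvd_mul hn).imp (fun h => ⟨n * 2, ?_⟩) (fun h => ⟨n * 2, ?_⟩)
      <;> rwa [pow_mul, Ideal.mem_span_singleton]

theorem dvd_mul_of_dvd_mul_mul (ha : IsValuationElement D a) {b x : D} (hab : ¬ a ∣ b)
    (h : b ∣ a * (a * x)) : b ∣ a * x := by
  obtain ⟨V, _, _, _, φ, hφ⟩ := ha.exists_ringHom_dvd_iff
  obtain ⟨e, he⟩ := h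
  have hba : φ b ∣ φ a :=
    (ValuationRing.dvd_total (φ a) (φ b)).resolve_left (mt (hφ b).mp hab)
  have hb0 : φ b ≠ 0 := fun h0 => hab ((hφ b).mp (h0 ▸ dvd_zero _))
  have hφe : φ a * (φ a * φ x) = φ b * φ e := by simpa only [map_mul] using congrArg φ he
  have hae : a ∣ e := by
    rw [← hφ, ← mul_dvd_mul_iff_left hb0, ← hφe]
    exact mul_dvd_mul hba (dvd_mul_right _ _)
  obtain ⟨f, rfl⟩ := hae
  exact ⟨f, mul_left_cancel₀ ha.1 (by rw [he]; ring)⟩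

theorem dvd_of_dvd_pow_succ (ha : IsValuationElement D a) {b : D} (hab : ¬ a ∣ b) :
    ∀ k : ℕ, b ∣ a ^ (k + 1) → b ∣ a
  | 0, h => by simpa using h
  | k + 1, h => by
    rw [pow_succ', pow_succ'] at h
    exact ha.dvd_of_dvd_pow_succ hab k (pow_succ' a k ▸ ha.dvd_mul_of_dvd_mul_mul hab h)

theorem dvd_or_dvd_of_radical_le (ha : IsValuationElement D a) {b : D} (hb : ¬ IsUnit b)
    (h : (Ideal.span {a}).radical ≤ (Ideal.span {b}).radical) : a ∣ b ∨ b ∣ a := by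
  obtain ⟨k, hk⟩ := h (Ideal.le_radical (Ideal.mem_span_singleton_self a))
  rw [Ideal.mem_span_singleton] at hk
  cases k with
  | zero => exact absurd (isUnit_of_dvd_one (by simpa using hk)) hb
  | succ k => exact or_iff_not_imp_left.mpr fun hab => ha.dvd_of_dvd_pow_succ hab k hk

end IsValuationElement

theorem stmt16_general (D : Type*) [CommRing D] [IsDomain D]
    (n : ℕ) (a : Fin n → D) (hval : ∀ i, IsValuationElement D (a i))
    (hinc : ∀ i j : Fin n, i ≠ j →
      ¬ (Ideal.span {a i} : Ideal D) ≤ Ideal.span {a j} ∧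
      ¬ (Ideal.span {a j} : Ideal D) ≤ Ideal.span {a i}) :
    Set.BijOn (fun i : Fin n => (Ideal.span {a i} : Ideal D).radical) Set.univ
      ((Ideal.span {∏ i, a i} : Ideal D).minimalPrimes) := by
  refine Ideal.bijOn_radical_span_singleton_minimalPrimes a
    (fun i => (hval i).isPrime_radical_span_singleton) fun i j hij hle => ?_
  rcases (hval i).dvd_or_dvd_of_radical_le (hval j).2.1 hle with h | h
  · exact (hinc i j hij).2 (Ideal.span_singleton_le_span_singleton.mpr h)
  · exact (hinc i j hij).1 (Ideal.span_singleton_le_span_singleton.mpr h)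

theorem stmt16 (D : Type*) [CommRing D] [IsDomain D] (h : IsVFD D)
    (n : ℕ) (a : Fin n → D) (hval : ∀ i, IsValuationElement D (a i))
    (hinc : ∀ i j : Fin n, i ≠ j →
      ¬ (Ideal.span {a i} : Ideal D) ≤ Ideal.span {a j} ∧
      ¬ (Ideal.span {a j} : Ideal D) ≤ Ideal.span {a i}) :
    Set.BijOn (fun i : Fin n => (Ideal.span {a i} : Ideal D).radical) Set.univ
      ((Ideal.span {∏ i, a i} : Ideal D).minimalPrimes) :=
  stmt16_general D n a hval hinc
end

section
/- Let D be an atomic VFD. Then D is a unique factorization domain. -/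
open Ideal

theorem PreValuationRing.isPrime_radical {R : Type*} [CommSemiring R] [PreValuationRing R]
    {I : Ideal R} (hI : I ≠ ⊤) : I.radical.IsPrime := by
  refine isPrime_iff.mpr ⟨radical_eq_top.not.mpr hI, fun {x y} hxy => ?_⟩
  rcases ValuationRing.dvd_total x y with ⟨c, rfl⟩ | ⟨c, rfl⟩
  · refine Or.inr (mem_radical_of_pow_mem (m := 2) ?_)
    rw [show (x * c) ^ 2 = x * (x * c) * c by ring]
    exact mul_mem_right c _ hxy
  · refine Or.inl (mem_radical_of_pow_mem (m := 2) ?_)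
    rw [show (y * c) ^ 2 = y * c * y * c by ring]
    exact mul_mem_right c _ hxy

namespace IsValuationElement

variable {D : Type*} [CommRing D] [IsDomain D]

theorem exists_valuationRing {a : D} (ha : IsValuationElement D a) :
    ∃ (V : Subring (FractionRing D)) (_ : ValuationRing V) (f : D →+* V),
      Function.Injective f ∧ ∀ d, f a ∣ f d ↔ a ∣ d := by
  obtain ⟨-, -, V, hDV, hV, hdvd⟩ := ha
  let f := (algebraMap D (FractionRing D)).codRestrict V fun d => hDV ⟨d, rfl⟩
  refine ⟨V, hV, f, fun x y hxy => IsFractionRing.injective D _ (congrArg Subtype.val hxy),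
    fun d => Iff.trans ⟨?_, ?_⟩ (hdvd d)⟩
  · rintro ⟨v, hv⟩
    exact ⟨v, v.2, congrArg Subtype.val hv⟩
  · rintro ⟨v, hv, h⟩
    exact ⟨⟨v, hv⟩, Subtype.ext h⟩

theorem isPrime_radical_span {a : D} (ha : IsValuationElement D a) :
    (span {a}).radical.IsPrime := by
  obtain ⟨V, _, f, -, hf⟩ := ha.exists_valuationRing
  have hcomap : comap f (span {f a}) = span {a} := by
    ext d
    simp only [mem_comap, mem_span_singleton, hf]
  have hne : span {f a} ≠ ⊤ := fun h =>
    ha.2.1 (isUnit_of_dvd_one ((hf 1).mp (map_one f ▸ (span_singleton_eq_top.mp h).dvd)))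
  have := PreValuationRing.isPrime_radical hne
  rw [← hcomap, ← comap_radical]
  exact IsPrime.comap f

/-- If `t ∤ p`, then `p ∣ t` in the valuation overring of `t`, and this lets one cancel a factor
`t` from `t ^ (n + 2) = p * e`. -/
theorem dvd_of_dvd_pow_succ_s18 {t p : D} (ht : IsValuationElement D t) (hp : p ≠ 0)
    (htp : ¬ t ∣ p) (n : ℕ) (h : p ∣ t ^ (n + 1)) : p ∣ t := by
  obtain ⟨V, _, f, hf_inj, hf⟩ := ht.exists_valuationRing
  have hfp : f p ≠ 0 := (map_ne_zero_iff f hf_inj).mpr hp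
  obtain ⟨c, hc⟩ := (ValuationRing.dvd_total (f t) (f p)).resolve_left (mt (hf p).mp htp)
  induction n with
  | zero => simpa using h
  | succ n ih =>
    obtain ⟨e, he⟩ := h
    have hfe : f t ∣ f e := ⟨f t ^ n * c, mul_left_cancel₀ hfp <| by
      rw [← map_mul, ← he, map_pow, pow_succ, hc]
      ring⟩
    obtain ⟨e₁, rfl⟩ := (hf e).mp hfe
    exact ih ⟨e₁, mul_left_cancel₀ ht.1 <| by
      rw [← pow_succ', he]
      ring⟩

end IsValuationElement

theorem dvd_of_mem_of_forall_irreducible {D : Type*} [CommSemiring D]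
    (hatomic : ∀ a : D, a ≠ 0 → ¬ IsUnit a →
      ∃ l : Multiset D, (∀ x ∈ l, Irreducible x) ∧ l.prod = a)
    {P : Ideal D} (hP : P.IsPrime) {p : D} (hirr : ∀ z, Irreducible z → z ∈ P → p ∣ z)
    {b : D} (hb : b ∈ P) : p ∣ b := by
  by_cases hb0 : b = 0
  · exact hb0 ▸ dvd_zero p
  have hbu : ¬ IsUnit b := fun hu => hP.ne_top (eq_top_of_isUnit_mem P hb hu)
  obtain ⟨l, hl, rfl⟩ := hatomic b hb0 hbu
  obtain ⟨z, hzl, hzP⟩ := (hP.multiset_prod_mem_iff_exists_mem l).mp hb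
  exact (hirr z (hl z hzl) hzP).trans (Multiset.dvd_prod hzl)

section VFD

variable {D : Type*} [CommRing D] [IsDomain D]

theorem IsVFD.isValuationElement_of_irreducible (h : IsVFD D) {p : D} (hp : Irreducible p) :
    IsValuationElement D p := by
  obtain ⟨l, hl, rfl⟩ := h p hp.ne_zero hp.not_isUnit
  obtain ⟨t, ht⟩ := Multiset.exists_mem_of_ne_zero (show l ≠ 0 by
    rintro rfl
    exact hp.not_isUnit (by simp))
  obtain ⟨l', rfl⟩ := Multiset.exists_cons_of_mem ht
  rw [Multiset.prod_cons] at hp ⊢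
  have hunit : IsUnit l'.prod :=
    (hp.isUnit_or_isUnit rfl).resolve_left (hl t (Multiset.mem_cons_self t l')).2.1
  obtain rfl : l' = 0 := Multiset.eq_zero_of_forall_notMem fun s hs =>
    (hl s (Multiset.mem_cons_of_mem hs)).2.1 (isUnit_of_dvd_unit (Multiset.dvd_prod hs) hunit)
  simpa using hl t (Multiset.mem_cons_self t 0)

theorem IsVFD.prime_of_irreducible (h : IsVFD D)
    (hatomic : ∀ a : D, a ≠ 0 → ¬ IsUnit a →
      ∃ l : Multiset D, (∀ x ∈ l, Irreducible x) ∧ l.prod = a)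
    {p : D} (hp : Irreducible p) : Prime p := by
  have hP := (h.isValuationElement_of_irreducible hp).isPrime_radical_span
  have hirr (z : D) (hz : Irreducible z) (hzP : z ∈ (span {p}).radical) : p ∣ z := by
    obtain ⟨n, hn⟩ := hzP
    rw [mem_span_singleton] at hn
    cases n with
    | zero => exact absurd (isUnit_of_dvd_one (pow_zero z ▸ hn)) hp.not_isUnit
    | succ n =>
      by_cases hzp : z ∣ p
      · exact hz.dvd_symm hp hzp
      · exact (h.isValuationElement_of_irreducible hz).dvd_of_dvd_pow_succ_s18 hp.ne_zero hzp n hn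
  have hle : (span {p}).radical ≤ span {p} := fun b hb =>
    mem_span_singleton.mpr (dvd_of_mem_of_forall_irreducible hatomic hP hirr hb)
  rw [← span_singleton_prime hp.ne_zero, ← le_antisymm hle le_radical]
  exact hP

end VFD

theorem stmt18 (D : Type*) [CommRing D] [IsDomain D] (h : IsVFD D)
    (hatomic : ∀ a : D, a ≠ 0 → ¬ IsUnit a →
      ∃ l : Multiset D, (∀ x ∈ l, Irreducible x) ∧ l.prod = a) :
    UniqueFactorizationMonoid D := by
  refine UniqueFactorizationMonoid.of_exists_prime_factors fun a ha => ?_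
  by_cases hu : IsUnit a
  · exact ⟨0, by simp, by simpa using (associated_one_iff_isUnit.mpr hu).symm⟩
  · obtain ⟨l, hl, rfl⟩ := hatomic a ha hu
    exact ⟨l, fun b hb => h.prime_of_irreducible hatomic (hl b hb), Associated.refl _⟩
end
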